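/- arXiv:2310.06343 — 7 statements merged into one kernel-verified Lean document; each statement's English description precedes it below -/
import Mathlib

section
/- For every probability mass function π on A, the KL-regularized objective satisfies J(π) ≤ λ * Real.log Z, where Z = ∑_a μ a * Real.exp (Q a / λ) is the partition function. -/
open Finset

/-- For every probability mass function `π` on a nonempty finite action space `A`,
the KL-regularized objective `J(π) = ∑ π a * Q a − λ * ∑ π a * log (π a / μ a)` is bounded
above by `λ * log Z`, where `Z = ∑ μ a * exp (Q a / λ)` is the partition function. -/
theorem kl_regularized_objective_le_log_partition
    {A : Type*} [Fintype A] [Nonempty A]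
    (lam : ℝ) (hlam : 0 < lam)
    (μ : A → ℝ) (hμpos : ∀ a, 0 < μ a) (hμsum : ∑ a, μ a = 1)
    (Q : A → ℝ)
    (π : A → ℝ) (hπnonneg : ∀ a, 0 ≤ π a) (hπsum : ∑ a, π a = 1) :
    (∑ a, π a * Q a) - lam * ∑ a, π a * Real.log (π a / μ a)
      ≤ lam * Real.log (∑ a, μ a * Real.exp (Q a / lam)) := by
  set x : A → ℝ := fun a => μ a * Real.exp (Q a / lam) with hx
  have hxpos : ∀ a, 0 < x a := fun a => mul_pos (hμpos a) (Real.exp_pos _)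
  set Z : ℝ := ∑ a, x a with hZdef
  have hZpos : 0 < Z := Finset.sum_pos (fun a _ => hxpos a) univ_nonempty
  -- rewrite LHS
  have hstep : (∑ a, π a * Q a) - lam * ∑ a, π a * Real.log (π a / μ a)
      = lam * ∑ a, π a * Real.log (x a / π a) := by
    rw [mul_sum, ← sum_sub_distrib, mul_sum]
    refine Finset.sum_congr rfl fun a _ => ?_
    rcases eq_or_lt_of_le (hπnonneg a) with h0 | hpos
    · simp [← h0]
    · have hμ := hμpos a
      rw [Real.log_div (mul_pos (hμpos a) (Real.exp_pos _)).ne' hpos.ne',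
        Real.log_mul hμ.ne' (Real.exp_pos _).ne', Real.log_exp,
        Real.log_div hpos.ne' hμ.ne']
      field_simp
      ring
  rw [hstep]
  have key : ∑ a, π a * Real.log (x a / π a) ≤ Real.log Z := by
    have h1 : ∑ a, π a * Real.log (x a / π a) - Real.log Z
        = ∑ a, (π a * Real.log (x a / π a) - π a * Real.log Z) := by
      rw [sum_sub_distrib, ← sum_mul, hπsum, one_mul]
    have h2 : ∀ a, π a * Real.log (x a / π a) - π a * Real.log Z ≤ x a / Z - π a := by
      intro a
      rcases eq_or_lt_of_le (hπnonneg a) with h0 | hpos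
      · simp [← h0]
        exact div_nonneg (hxpos a).le hZpos.le
      · have hy : 0 < x a / (π a * Z) := div_pos (hxpos a) (mul_pos hpos hZpos)
        have hlog := Real.log_le_sub_one_of_pos hy
        have : π a * Real.log (x a / (π a * Z)) ≤ π a * (x a / (π a * Z) - 1) :=
          mul_le_mul_of_nonneg_left hlog hpos.le
        calc π a * Real.log (x a / π a) - π a * Real.log Z
            = π a * Real.log (x a / (π a * Z)) := by
              rw [Real.log_div (hxpos a).ne' (mul_pos hpos hZpos).ne',
                Real.log_mul hpos.ne' hZpos.ne',
                Real.log_div (hxpos a).ne' hpos.ne']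
              ring
          _ ≤ π a * (x a / (π a * Z) - 1) := this
          _ = x a / Z - π a := by field_simp
    have h3 : ∑ a, (x a / Z - π a) = 0 := by
      rw [sum_sub_distrib, ← sum_div, ← hZdef, div_self hZpos.ne', hπsum, sub_self]
    have := Finset.sum_le_sum (s := univ) (fun a _ => h2 a)
    linarith [h1 ▸ this.trans_eq h3]
  exact mul_le_mul_of_nonneg_left key hlam.le
end

section
/- The Gibbs policy π★ defined by π★ a = μ a * Real.exp (Q a / λ) / Z is a probability mass function on A and attains J(π★) = λ * Real.log Z; consequently J(π) ≤ J(π★) for every probability mass function π on A, i.e. π★ maximizes the KL-regularized objective (the closed-form solution π*(a|s) ∝ μ(a|s) exp(Q(s,a)/λ) of the constrained policy search problem). -/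
open Finset

/-- The Gibbs policy `π★ a = μ a * exp (Q a / λ) / Z` is a probability mass function on `A`,
attains `J(π★) = λ * log Z`, and maximizes the KL-regularized objective
`J(π) = ∑ π a * Q a − λ * ∑ π a * log (π a / μ a)` over all probability mass functions on `A`,
i.e. it is the closed-form solution `π*(a|s) ∝ μ(a|s) exp(Q(s,a)/λ)` of the constrained
policy search problem. -/
theorem gibbs_policy_maximizes_kl_regularized_objective
    {A : Type*} [Fintype A] [Nonempty A]
    (lam : ℝ) (hlam : 0 < lam)
    (μ : A → ℝ) (hμpos : ∀ a, 0 < μ a) (hμsum : ∑ a, μ a = 1)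
    (Q : A → ℝ)
    (Z : ℝ) (hZ : Z = ∑ a, μ a * Real.exp (Q a / lam))
    (pstar : A → ℝ) (hpstar : ∀ a, pstar a = μ a * Real.exp (Q a / lam) / Z) :
    (∀ a, 0 ≤ pstar a) ∧ (∑ a, pstar a = 1) ∧
    ((∑ a, pstar a * Q a) - lam * ∑ a, pstar a * Real.log (pstar a / μ a)
        = lam * Real.log Z) ∧
    (∀ π : A → ℝ, (∀ a, 0 ≤ π a) → (∑ a, π a = 1) →
      (∑ a, π a * Q a) - lam * ∑ a, π a * Real.log (π a / μ a)
        ≤ (∑ a, pstar a * Q a) - lam * ∑ a, pstar a * Real.log (pstar a / μ a)) := by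
  have hZpos : 0 < Z := by
    rw [hZ]
    exact Finset.sum_pos (fun a _ => mul_pos (hμpos a) (Real.exp_pos _))
      Finset.univ_nonempty
  have hppos : ∀ a, 0 < pstar a := fun a => by
    rw [hpstar a]; exact div_pos (mul_pos (hμpos a) (Real.exp_pos _)) hZpos
  have hpsum : ∑ a, pstar a = 1 := by
    simp only [hpstar]
    rw [← Finset.sum_div, ← hZ, div_self hZpos.ne']
  have hlog : ∀ a, Real.log (pstar a / μ a) = Q a / lam - Real.log Z := by
    intro a
    have h : pstar a / μ a = Real.exp (Q a / lam) / Z := by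
      rw [hpstar a]; field_simp [(hμpos a).ne']
    rw [h, Real.log_div (Real.exp_pos _).ne' hZpos.ne', Real.log_exp]
  have hval : (∑ a, pstar a * Q a) - lam * ∑ a, pstar a * Real.log (pstar a / μ a)
      = lam * Real.log Z := by
    simp only [hlog, mul_sub]
    rw [Finset.sum_sub_distrib, mul_sub]
    have h1 : ∑ a, pstar a * (Q a / lam) = (∑ a, pstar a * Q a) / lam := by
      rw [Finset.sum_div]
      exact Finset.sum_congr rfl (fun a _ => by ring)
    have h2 : ∑ a, pstar a * Real.log Z = Real.log Z := by
      rw [← Finset.sum_mul, hpsum, one_mul]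
    rw [h1, h2, mul_div_cancel₀ _ hlam.ne']
    ring
  refine ⟨fun a => (hppos a).le, hpsum, hval, ?_⟩
  intro π hπ0 hπ1
  rw [hval]
  have key : ∀ a, π a * Q a - lam * (π a * Real.log (π a / μ a))
      ≤ lam * (μ a * Real.exp (Q a / lam) / Z) - lam * π a + lam * Real.log Z * π a := by
    intro a
    rcases eq_or_lt_of_le (hπ0 a) with h0 | hp
    · rw [← h0]
      simp only [zero_mul, mul_zero, sub_zero, zero_sub, add_zero, neg_zero]
      have : 0 ≤ lam * (μ a * Real.exp (Q a / lam) / Z) :=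
        (mul_pos hlam (div_pos (mul_pos (hμpos a) (Real.exp_pos _)) hZpos)).le
      linarith
    · have hr : 0 < μ a * Real.exp (Q a / lam) / (π a * Z) :=
        div_pos (mul_pos (hμpos a) (Real.exp_pos _)) (mul_pos hp hZpos)
      have hlogle := Real.log_le_sub_one_of_pos hr
      have hlogeq : Real.log (μ a * Real.exp (Q a / lam) / (π a * Z))
          = Real.log (μ a) + Q a / lam - Real.log (π a) - Real.log Z := by
        rw [Real.log_div (mul_pos (hμpos a) (Real.exp_pos _)).ne' (mul_pos hp hZpos).ne',
          Real.log_mul (hμpos a).ne' (Real.exp_pos _).ne', Real.log_exp,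
          Real.log_mul hp.ne' hZpos.ne']
        ring
      have hmul := mul_le_mul_of_nonneg_left hlogle (le_of_lt (mul_pos hlam hp))
      rw [hlogeq] at hmul
      have hrw : lam * π a * (μ a * Real.exp (Q a / lam) / (π a * Z) - 1)
          = lam * (μ a * Real.exp (Q a / lam) / Z) - lam * π a := by
        field_simp
      rw [hrw] at hmul
      have hL : π a * Q a - lam * (π a * Real.log (π a / μ a)) - lam * Real.log Z * π a
          = lam * π a * (Real.log (μ a) + Q a / lam - Real.log (π a) - Real.log Z) := by
        rw [Real.log_div hp.ne' (hμpos a).ne']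
        field_simp
        ring
      linarith
  calc (∑ a, π a * Q a) - lam * ∑ a, π a * Real.log (π a / μ a)
      = ∑ a, (π a * Q a - lam * (π a * Real.log (π a / μ a))) := by
        rw [Finset.sum_sub_distrib, Finset.mul_sum]
    _ ≤ ∑ a, (lam * (μ a * Real.exp (Q a / lam) / Z) - lam * π a
          + lam * Real.log Z * π a) := Finset.sum_le_sum (fun a _ => key a)
    _ = lam * Real.log Z := by
        have e1 : ∑ a, lam * (μ a * Real.exp (Q a / lam) / Z) = lam := by
          rw [← Finset.mul_sum, ← Finset.sum_div, ← hZ, div_self hZpos.ne', mul_one]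
        have e2 : ∑ a, lam * π a = lam := by rw [← Finset.mul_sum, hπ1, mul_one]
        have e3 : ∑ a, lam * Real.log Z * π a = lam * Real.log Z := by
          rw [← Finset.mul_sum, hπ1, mul_one]
        rw [Finset.sum_add_distrib, Finset.sum_sub_distrib, e1, e2, e3]
        ring
end

section
/- If a probability mass function π on A satisfies J(π) = λ * Real.log Z, then π = π★; that is, the Gibbs policy π★ a = μ a * Real.exp (Q a / λ) / Z is the unique maximizer of the KL-regularized objective. -/
open Finset

/-- Uniqueness of the maximizer: if a probability mass function `π` on `A` attains the optimal
value `J(π) = λ * log Z` of the KL-regularized objective, then `π` equals the Gibbs policy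
`π★ a = μ a * exp (Q a / λ) / Z`. -/
theorem gibbs_policy_unique_maximizer
    {A : Type*} [Fintype A] [Nonempty A]
    (lam : ℝ) (hlam : 0 < lam)
    (μ : A → ℝ) (hμpos : ∀ a, 0 < μ a) (hμsum : ∑ a, μ a = 1)
    (Q : A → ℝ)
    (Z : ℝ) (hZ : Z = ∑ a, μ a * Real.exp (Q a / lam))
    (π : A → ℝ) (hπnonneg : ∀ a, 0 ≤ π a) (hπsum : ∑ a, π a = 1)
    (hopt : (∑ a, π a * Q a) - lam * ∑ a, π a * Real.log (π a / μ a)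
      = lam * Real.log Z) :
    ∀ a, π a = μ a * Real.exp (Q a / lam) / Z := by
  set g : A → ℝ := fun a => μ a * Real.exp (Q a / lam) / Z with hg
  have hZpos : 0 < Z := by
    rw [hZ]
    exact Finset.sum_pos (fun a _ => mul_pos (hμpos a) (Real.exp_pos _))
      Finset.univ_nonempty
  have hgpos : ∀ a, 0 < g a := fun a =>
    div_pos (mul_pos (hμpos a) (Real.exp_pos _)) hZpos
  have hgsum : ∑ a, g a = 1 := by
    simp only [hg]
    rw [← Finset.sum_div, ← hZ, div_self hZpos.ne']
  -- per-term identity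
  have key : ∀ a, π a * Q a - lam * (π a * Real.log (π a / μ a))
      = lam * (π a * Real.log Z) - lam * (π a * Real.log (π a / g a)) := by
    intro a
    rcases eq_or_lt_of_le (hπnonneg a) with h0 | hpos
    · simp [← h0]
    · have hμa := hμpos a
      have hga := hgpos a
      have hlogga : Real.log (g a) = Real.log (μ a) + Q a / lam - Real.log Z := by
        simp only [hg]
        rw [Real.log_div (mul_pos hμa (Real.exp_pos _)).ne' hZpos.ne',
          Real.log_mul hμa.ne' (Real.exp_pos _).ne', Real.log_exp]
      rw [Real.log_div hpos.ne' hμa.ne', Real.log_div hpos.ne' hga.ne', hlogga]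
      field_simp
      ring
  have h1 : ∑ a, (π a * Q a - lam * (π a * Real.log (π a / μ a)))
      = ∑ a, (lam * (π a * Real.log Z) - lam * (π a * Real.log (π a / g a))) :=
    Finset.sum_congr rfl fun a _ => key a
  have hlogZsum : ∑ a, π a * Real.log Z = Real.log Z := by
    rw [← Finset.sum_mul, hπsum, one_mul]
  have hS : ∑ a, π a * Real.log (π a / g a) = 0 := by
    rw [Finset.sum_sub_distrib, Finset.sum_sub_distrib, ← Finset.mul_sum,
      ← Finset.mul_sum, ← Finset.mul_sum, hlogZsum] at h1
    rw [h1] at hopt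
    have h2 : lam * ∑ a, π a * Real.log (π a / g a) = 0 := by linarith
    exact (mul_eq_zero.mp h2).resolve_left hlam.ne'
  -- termwise nonnegativity of F a := π a * log (π a / g a) - (π a - g a)
  have hterm : ∀ a ∈ Finset.univ, 0 ≤ π a * Real.log (π a / g a) - (π a - g a) := by
    intro a _
    rcases eq_or_lt_of_le (hπnonneg a) with h0 | hpos
    · simp [← h0]; exact (hgpos a).le
    · have hga := hgpos a
      have hlog : Real.log (g a / π a) ≤ g a / π a - 1 :=
        Real.log_le_sub_one_of_pos (div_pos hga hpos)
      have hrev : Real.log (g a / π a) = - Real.log (π a / g a) := by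
        rw [Real.log_div hga.ne' hpos.ne', Real.log_div hpos.ne' hga.ne']; ring
      rw [hrev] at hlog
      have hdiv : g a / π a - 1 = (g a - π a) / π a := by field_simp
      rw [hdiv] at hlog
      have h3 := (le_div_iff₀ hpos).mp hlog
      linarith
  have hFsum : ∑ a, (π a * Real.log (π a / g a) - (π a - g a)) = 0 := by
    rw [Finset.sum_sub_distrib, Finset.sum_sub_distrib, hS, hπsum, hgsum]; ring
  have hFzero := (Finset.sum_eq_zero_iff_of_nonneg hterm).mp hFsum
  intro a
  have hFa := hFzero a (Finset.mem_univ a)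
  have hga := hgpos a
  rcases eq_or_lt_of_le (hπnonneg a) with h0 | hpos
  · exfalso
    rw [← h0] at hFa
    simp at hFa
    linarith
  · by_contra hne
    have hx : g a / π a ≠ 1 := by
      intro h
      exact hne ((div_eq_one_iff_eq hpos.ne').mp h).symm
    have hlog : Real.log (g a / π a) < g a / π a - 1 :=
      Real.log_lt_sub_one_of_pos (div_pos hga hpos) hx
    have hrev : Real.log (g a / π a) = - Real.log (π a / g a) := by
      rw [Real.log_div hga.ne' hpos.ne', Real.log_div hpos.ne' hga.ne']; ring
    rw [hrev] at hlog
    have heq : π a * Real.log (π a / g a) = π a - g a := by linarith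
    have hdiv : g a / π a - 1 = (g a - π a) / π a := by field_simp
    rw [hdiv] at hlog
    have h3 := (lt_div_iff₀ hpos).mp hlog
    linarith
end

section
/- For every probability measure π on Ω whose Kullback–Leibler divergence from μ is finite, one has ∫ Q dπ − λ * (KL(π‖μ)).toReal ≤ λ * Real.log Z, where Z = ∫ Real.exp (Q ω / λ) ∂μ. -/
/-! The proof is Gibbs' inequality for `π` against the Gibbs measure `μ.tilted (Q / λ)`, whose
density `exp (Q / λ) / Z` turns `KL(π ‖ μ.tilted (Q / λ))` into
`KL(π ‖ μ) − ∫ Q dπ / λ + log Z`. -/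

open MeasureTheory

open Classical in
/-- The Kullback–Leibler divergence of `π` from `μ`, valued in `[0,∞]`: the integral of the
logarithm of the Radon–Nikodym density when `π ≪ μ` with integrable log-density, and `∞`
otherwise. -/
noncomputable def klDiv {Ω : Type*} [MeasurableSpace Ω] (π μ : Measure Ω) : ENNReal :=
  if π ≪ μ ∧ Integrable (llr π μ) π then ENNReal.ofReal (∫ ω, llr π μ ω ∂π) else ⊤

section

variable {Ω : Type*} [MeasurableSpace Ω] {π μ : Measure Ω}

-- Mathlib's divergence carries the correction `μ(Ω) − π(Ω)`, which vanishes here.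
lemma klDiv_eq_informationTheory_klDiv (h : π Set.univ = μ Set.univ) :
    klDiv π μ = InformationTheory.klDiv π μ := by
  by_cases hac : π ≪ μ ∧ Integrable (llr π μ) π
  · rw [klDiv, if_pos hac, InformationTheory.klDiv_of_ac_of_integrable hac.1 hac.2,
      measureReal_def, measureReal_def, h, add_sub_cancel_right]
  · rw [klDiv, if_neg hac, eq_comm, InformationTheory.klDiv_eq_top_iff]
    exact fun hπμ hint ↦ hac ⟨hπμ, hint⟩

theorem integral_sub_toReal_klDiv_le_log_integral_exp
    [IsProbabilityMeasure π] [IsProbabilityMeasure μ] {f : Ω → ℝ}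
    (hKL : InformationTheory.klDiv π μ ≠ ⊤) (hfπ : Integrable f π)
    (hfμ : Integrable (fun ω ↦ Real.exp (f ω)) μ) :
    ∫ ω, f ω ∂π - (InformationTheory.klDiv π μ).toReal
      ≤ Real.log (∫ ω, Real.exp (f ω) ∂μ) := by
  obtain ⟨hac, hint⟩ := InformationTheory.klDiv_ne_top_iff.mp hKL
  have := isProbabilityMeasure_tilted hfμ
  have gibbs : 0 ≤ ∫ ω, llr π (μ.tilted f) ω ∂π := by
    rw [← InformationTheory.toReal_klDiv_of_measure_eq
      (hac.trans (absolutelyContinuous_tilted hfμ)) (by simp)]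
    exact ENNReal.toReal_nonneg
  rw [integral_llr_tilted_right hac hfπ hfμ hint,
    ← InformationTheory.toReal_klDiv_of_measure_eq hac (by simp)] at gibbs
  linarith

end

/-- For every probability measure `π` with finite Kullback–Leibler divergence from the
reference probability measure `μ`, the KL-regularized objective is bounded by the log-partition
function: `∫ Q dπ − λ * KL(π‖μ) ≤ λ * log Z` with `Z = ∫ exp (Q ω / λ) ∂μ`. -/
theorem integral_sub_klDiv_le_log_partition
    {Ω : Type*} [MeasurableSpace Ω]
    (μ : Measure Ω) [IsProbabilityMeasure μ]
    (Q : Ω → ℝ) (hQmeas : Measurable Q) (C : ℝ) (hQbdd : ∀ ω, |Q ω| ≤ C)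
    (lam : ℝ) (hlam : 0 < lam)
    (π : Measure Ω) [IsProbabilityMeasure π] (hKL : klDiv π μ ≠ ⊤) :
    (∫ ω, Q ω ∂π) - lam * (klDiv π μ).toReal
      ≤ lam * Real.log (∫ ω, Real.exp (Q ω / lam) ∂μ) := by
  have hQπ : Integrable Q π :=
    .of_bound hQmeas.aestronglyMeasurable C (ae_of_all _ hQbdd)
  have hexp : Integrable (fun ω ↦ Real.exp (Q ω / lam)) μ := by
    refine .of_bound (by fun_prop) (Real.exp (C / lam)) (ae_of_all _ fun ω ↦ ?_)
    rw [Real.norm_of_nonneg (Real.exp_pos _).le, Real.exp_le_exp]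
    exact div_le_div_of_nonneg_right ((le_abs_self _).trans (hQbdd ω)) hlam.le
  rw [klDiv_eq_informationTheory_klDiv (by simp)] at hKL ⊢
  have key := integral_sub_toReal_klDiv_le_log_integral_exp hKL (hQπ.div_const lam) hexp
  rw [integral_div] at key
  calc (∫ ω, Q ω ∂π) - lam * (InformationTheory.klDiv π μ).toReal
      = lam * ((∫ ω, Q ω ∂π) / lam - (InformationTheory.klDiv π μ).toReal) := by
        field_simp
    _ ≤ lam * Real.log (∫ ω, Real.exp (Q ω / lam) ∂μ) := by gcongr
end

section
/- If in addition p is continuous with compact support, then the smoothed density p_k is differentiable at every x ∈ E and its gradient is given by differentiation under the integral sign: gradient p_k x = −(1/k^2) • ∫ (p a * φ_k (x − a)) • (x − a) ∂a (Bochner integral with respect to Lebesgue measure on E). -/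
/-!
The Gaussian has gradient `-(1/k²) φ(v) v`, and `‖v‖ e^{-‖v‖²/(2k²)} ≤ k`, so for integrable `p`
the gradient of `z ↦ p a * φ (z - a)` is bounded uniformly in `z` by a multiple of `|p a|`.
Dominated differentiation under the integral sign then gives the formula.
-/

open MeasureTheory InnerProductSpace Filter Topology

theorem mul_exp_neg_sq_div_le {k : ℝ} (hk : 0 < k) (t : ℝ) :
    t * Real.exp (-t ^ 2 / (2 * k ^ 2)) ≤ k := by
  have hexp := Real.add_one_le_exp (t ^ 2 / (2 * k ^ 2))
  have hquad : t ≤ k * (t ^ 2 / (2 * k ^ 2) + 1) := by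
    rw [← sub_nonneg]
    have : k * (t ^ 2 / (2 * k ^ 2) + 1) - t = ((t - k) ^ 2 + k ^ 2) / (2 * k) := by
      field_simp; ring
    rw [this]; positivity
  rw [neg_div, Real.exp_neg, ← div_eq_mul_inv, div_le_iff₀ (Real.exp_pos _)]
  nlinarith

theorem hasGradientAt_integral_of_dominated_of_gradient_le {E α : Type*}
    [NormedAddCommGroup E] [InnerProductSpace ℝ E] [CompleteSpace E] [MeasurableSpace α]
    {μ : Measure α} {F : E → α → ℝ} {G : E → α → E} {x₀ : E} {s : Set E} {bound : α → ℝ}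
    (hs : s ∈ 𝓝 x₀) (hF_meas : ∀ᶠ x in 𝓝 x₀, AEStronglyMeasurable (F x) μ)
    (hF_int : Integrable (F x₀) μ) (hG_meas : AEStronglyMeasurable (G x₀) μ)
    (h_bound : ∀ᵐ a ∂μ, ∀ x ∈ s, ‖G x a‖ ≤ bound a) (bound_integrable : Integrable bound μ)
    (h_diff : ∀ᵐ a ∂μ, ∀ x ∈ s, HasGradientAt (F · a) (G x a) x) :
    HasGradientAt (fun x ↦ ∫ a, F x a ∂μ) (∫ a, G x₀ a ∂μ) x₀ := by
  have := hasFDerivAt_integral_of_dominated_of_fderiv_le (F' := fun x a ↦ toDual ℝ E (G x a))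
    hs hF_meas hF_int ((toDual ℝ E).continuous.comp_aestronglyMeasurable hG_meas)
    (by simpa only [LinearIsometryEquiv.norm_map] using h_bound) bound_integrable
    (by simpa only [hasGradientAt_iff_hasFDerivAt] using h_diff)
  rw [hasGradientAt_iff_hasFDerivAt]
  exact ((toDual ℝ E).toLinearIsometry.integral_comp_comm (G x₀) (μ := μ)) ▸ this

section GaussianKernel

variable {E : Type*} [NormedAddCommGroup E]

noncomputable def gaussianKernel (c k : ℝ) (v : E) : ℝ := c * Real.exp (-‖v‖ ^ 2 / (2 * k ^ 2))

theorem norm_gaussianKernel_le (c k : ℝ) (v : E) : ‖gaussianKernel c k v‖ ≤ |c| := by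
  rw [gaussianKernel, norm_mul, Real.norm_eq_abs, Real.norm_of_nonneg (Real.exp_pos _).le]
  refine mul_le_of_le_one_right (abs_nonneg c) (Real.exp_le_one_iff.2 ?_)
  rw [neg_div]
  exact neg_nonpos.2 (by positivity)

variable [InnerProductSpace ℝ E]

theorem norm_gaussianKernel_smul_le (c : ℝ) {k : ℝ} (hk : 0 < k) (v : E) :
    ‖gaussianKernel c k v • v‖ ≤ |c| * k := by
  rw [gaussianKernel, norm_smul, norm_mul, Real.norm_eq_abs,
    Real.norm_of_nonneg (Real.exp_pos _).le, mul_assoc, mul_comm (Real.exp _)]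
  exact mul_le_mul_of_nonneg_left (mul_exp_neg_sq_div_le hk ‖v‖) (abs_nonneg c)

variable [CompleteSpace E]

theorem hasGradientAt_gaussianKernel (c k : ℝ) (v : E) :
    HasGradientAt (gaussianKernel c k) (-(1 / k ^ 2) • gaussianKernel c k v • v) v := by
  have h := (((hasStrictFDerivAt_norm_sq v).hasFDerivAt.mul_const
    (-(2 * k ^ 2)⁻¹)).exp).const_mul c
  simp only [← neg_div, mul_neg, ← div_eq_mul_inv] at h
  rw [hasGradientAt_iff_hasFDerivAt]
  refine h.congr_fderiv ?_
  ext w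
  simp only [mul_inv_rev, neg_smul, smul_neg, neg_apply, smul_apply, coe_innerSL_apply,
    nsmul_eq_mul, Nat.cast_ofNat, smul_eq_mul, one_div, gaussianKernel, map_neg, map_smul,
    toDual_apply_apply, neg_inj]
  ring

theorem continuous_gaussianKernel (c k : ℝ) : Continuous (gaussianKernel (E := E) c k) :=
  continuous_iff_continuousAt.2 fun v ↦
    (hasGradientAt_gaussianKernel c k v).differentiableAt.continuousAt

theorem hasGradientAt_mul_gaussianKernel_sub (c k r : ℝ) (a z : E) :
    HasGradientAt (fun z ↦ r * gaussianKernel c k (z - a))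
      (-(1 / k ^ 2) • (r * gaussianKernel c k (z - a)) • (z - a)) z := by
  rw [hasGradientAt_iff_hasFDerivAt]
  refine ((hasGradientAt_gaussianKernel c k (z - a)).hasFDerivAt.comp z
    ((hasFDerivAt_id z).sub_const a) |>.const_mul r).congr_fderiv ?_
  ext w
  simp only [one_div, neg_smul, map_neg, map_smul, map_sub, ContinuousLinearMap.comp_id, smul_neg,
    neg_apply, smul_apply, sub_apply, toDual_apply_apply, smul_eq_mul, mul_smul, neg_inj]
  ring

variable [MeasurableSpace E] [BorelSpace E] [SecondCountableTopology E]

theorem hasGradientAt_integral_mul_gaussianKernel {μ : Measure E} {p : E → ℝ}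
    (hp : Integrable p μ) (c : ℝ) {k : ℝ} (hk : 0 < k) (x : E) :
    HasGradientAt (fun z ↦ ∫ a, p a * gaussianKernel c k (z - a) ∂μ)
      (-(1 / k ^ 2) • ∫ a, (p a * gaussianKernel c k (x - a)) • (x - a) ∂μ) x := by
  have hg := continuous_gaussianKernel (E := E) c k
  have h_bound (a z : E) : ‖-(1 / k ^ 2) • (p a * gaussianKernel c k (z - a)) • (z - a)‖ ≤
      1 / k ^ 2 * (|c| * k) * ‖p a‖ := by
    rw [norm_smul, mul_smul, norm_smul, norm_neg, Real.norm_of_nonneg (by positivity), mul_assoc,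
      mul_comm _ ‖p a‖]
    gcongr
    exact norm_gaussianKernel_smul_le c hk (z - a)
  rw [← integral_smul]
  refine hasGradientAt_integral_of_dominated_of_gradient_le univ_mem
    (Eventually.of_forall fun z ↦
      hp.aestronglyMeasurable.mul (hg.comp (continuous_sub_left z)).aestronglyMeasurable)
    (hp.mul_bdd (hg.comp (continuous_sub_left x)).aestronglyMeasurable
      (Eventually.of_forall fun a ↦ norm_gaussianKernel_le c k (x - a)))
    ?_ (Eventually.of_forall fun a z _ ↦ h_bound a z) (hp.norm.const_mul _)
    (Eventually.of_forall fun a z _ ↦ hasGradientAt_mul_gaussianKernel_sub c k (p a) a z)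
  exact ((hp.aestronglyMeasurable.mul (hg.comp (continuous_sub_left x)).aestronglyMeasurable).smul
    (continuous_sub_left x).aestronglyMeasurable).const_smul _

end GaussianKernel

theorem gradient_gaussian_smoothed_density_general
    (n : ℕ) (k : ℝ) (hk : 0 < k)
    (φ : EuclideanSpace ℝ (Fin n) → ℝ)
    (hφ : ∀ x, φ x = (2 * Real.pi * k ^ 2) ^ (-(n : ℝ) / 2) *
        Real.exp (-‖x‖ ^ 2 / (2 * k ^ 2)))
    (p : EuclideanSpace ℝ (Fin n) → ℝ)
    (hpcont : Continuous p) (hpsupp : HasCompactSupport p)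
    (pk : EuclideanSpace ℝ (Fin n) → ℝ)
    (hpk : ∀ x, pk x = ∫ a, p a * φ (x - a)) :
    ∀ x : EuclideanSpace ℝ (Fin n),
      DifferentiableAt ℝ pk x ∧
      gradient pk x = -(1 / k ^ 2) • ∫ a, (p a * φ (x - a)) • (x - a) := by
  intro x
  obtain rfl : pk = fun z ↦ ∫ a, p a * φ (z - a) := funext hpk
  obtain rfl : φ = gaussianKernel ((2 * Real.pi * k ^ 2) ^ (-(n : ℝ) / 2)) k := funext hφ
  have hp : Integrable p := hpcont.integrable_of_hasCompactSupport hpsupp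
  have h := hasGradientAt_integral_mul_gaussianKernel hp
    ((2 * Real.pi * k ^ 2) ^ (-(n : ℝ) / 2)) hk x
  exact ⟨h.differentiableAt, h.gradient⟩

/-- Differentiation under the integral sign for the Gaussian-smoothed density: if the
probability density `p` is continuous with compact support, then the smoothed density
`p_k(x) = ∫ p a * φ_k (x − a) ∂a` is differentiable at every `x` and
`∇ p_k x = −(1/k²) • ∫ (p a * φ_k (x − a)) • (x − a) ∂a`. -/
theorem gradient_gaussian_smoothed_density
    (n : ℕ) (hn : 0 < n) (k : ℝ) (hk : 0 < k)
    (φ : EuclideanSpace ℝ (Fin n) → ℝ)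
    (hφ : ∀ x, φ x = (2 * Real.pi * k ^ 2) ^ (-(n : ℝ) / 2) *
        Real.exp (-‖x‖ ^ 2 / (2 * k ^ 2)))
    (p : EuclideanSpace ℝ (Fin n) → ℝ)
    (hpmeas : Measurable p) (hpnonneg : ∀ a, 0 ≤ p a) (hpint : ∫ a, p a = 1)
    (hpcont : Continuous p) (hpsupp : HasCompactSupport p)
    (pk : EuclideanSpace ℝ (Fin n) → ℝ)
    (hpk : ∀ x, pk x = ∫ a, p a * φ (x - a)) :
    ∀ x : EuclideanSpace ℝ (Fin n),
      DifferentiableAt ℝ pk x ∧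
      gradient pk x = -(1 / k ^ 2) • ∫ a, (p a * φ (x - a)) • (x - a) :=
  gradient_gaussian_smoothed_density_general n k hk φ hφ p hpcont hpsupp pk hpk
end

section
/- Suppose in addition that p is continuous with compact support, Q : E → ℝ is differentiable, λ > 0, and Z_k > 0 is a constant, and define the guided smoothed policy density π_k(x) = p_k(x) * Real.exp (Q x / λ) / Z_k. Then for every x ∈ E, gradient (fun y => Real.log (π_k y)) x = −(1/k^2) • (x − m x) + (1/λ) • gradient Q x, where m x = (p_k x)⁻¹ • ∫ (p a * φ_k (x − a)) • a ∂a is the posterior mean (this is the guided score identity of Eqs. (25)–(26): ∇ log π^k(a^k) = −E[(a^k − a)/k² | a^k] + (1/λ) ∇ Q(s, a^k)). -/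
/-!
Differentiating under the integral sign gives `∇ p_k x = ∫ p a • ∇φ (x - a) da`: the derivative
of the integrand is dominated near `x` because `p` has compact support and `∇φ` is continuous.
For the Gaussian kernel `∇φ y = -(φ y / k²) • y`, so
`∇ p_k x = -(1/k²) • (p_k x • x - ∫ (p a * φ (x - a)) • a da)`.
As `p_k > 0`, `log π_k = log p_k + Q / λ - log Z_k`, and dividing `∇ p_k x` by `p_k x` brings
out the posterior mean.
-/

open MeasureTheory InnerProductSpace

theorem integral_smul_sub {α F : Type*} [MeasurableSpace α] {μ : Measure α}
    [NormedAddCommGroup F] [NormedSpace ℝ F] [CompleteSpace F] {w : α → ℝ} {v : α → F} (x : F)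
    (hw : Integrable w μ) (hwv : Integrable (fun a => w a • v a) μ) :
    ∫ a, w a • (x - v a) ∂μ = (∫ a, w a ∂μ) • x - ∫ a, w a • v a ∂μ := by
  simp_rw [smul_sub]
  rw [integral_sub (hw.smul_const x) hwv, integral_smul_const]

theorem integral_mul_comp_sub_pos {G : Type*} [TopologicalSpace G] [AddGroup G]
    [IsTopologicalAddGroup G] [MeasurableSpace G] [OpensMeasurableSpace G] {μ : Measure G}
    [μ.IsOpenPosMeasure] [IsFiniteMeasureOnCompacts μ] {p φ : G → ℝ} (hp : Continuous p)
    (hpc : HasCompactSupport p) (hp0 : 0 ≤ p) (hp_ne : p ≠ 0) (hφ : Continuous φ)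
    (hφ0 : ∀ y, 0 < φ y) (x : G) :
    0 < ∫ a, p a * φ (x - a) ∂μ := by
  obtain ⟨a, ha⟩ := Function.ne_iff.1 hp_ne
  have hcont : Continuous fun a => p a * φ (x - a) := by fun_prop
  exact hcont.integral_pos_of_hasCompactSupport_nonneg_nonzero hpc.mul_right
    (fun b => mul_nonneg (hp0 b) (hφ0 _).le) (mul_ne_zero ha (hφ0 _).ne')

section Gradient

variable {E : Type*} [NormedAddCommGroup E] [InnerProductSpace ℝ E] [CompleteSpace E]

theorem hasGradientAt_mul_exp_neg_norm_sq_div (c k : ℝ) (y : E) :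
    HasGradientAt (fun y => c * Real.exp (-‖y‖ ^ 2 / (2 * k ^ 2)))
      (-(c * Real.exp (-‖y‖ ^ 2 / (2 * k ^ 2)) / k ^ 2) • y) y := by
  have hg : HasDerivAt (fun t => c * Real.exp (-t / (2 * k ^ 2)))
      (c * (Real.exp (-‖y‖ ^ 2 / (2 * k ^ 2)) * (-1 / (2 * k ^ 2)))) (‖y‖ ^ 2) :=
    (((hasDerivAt_id _).neg.div_const _).exp).const_mul c
  rw [hasGradientAt_iff_hasFDerivAt]
  refine (hg.comp_hasFDerivAt y (hasStrictFDerivAt_norm_sq y).hasFDerivAt).congr_fderiv ?_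
  ext v
  simp only [smul_apply, coe_innerSL_apply, nsmul_eq_mul, Nat.cast_ofNat, smul_eq_mul, neg_smul,
    map_neg, map_smul, neg_apply, toDual_apply_apply]
  ring

theorem HasGradientAt.log_mul_exp_div {f g : E → ℝ} {f' g' : E} {x : E}
    (hf : HasGradientAt f f' x) (hg : HasGradientAt g g' x) (hfx : f x ≠ 0) (lam : ℝ) {Z : ℝ}
    (hZ : Z ≠ 0) :
    HasGradientAt (fun y => Real.log (f y * Real.exp (g y / lam) / Z))
      ((f x)⁻¹ • f' + lam⁻¹ • g') x := by
  have hlog : HasGradientAt (fun y => Real.log (f y) + lam⁻¹ * g y - Real.log Z)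
      ((f x)⁻¹ • f' + lam⁻¹ • g') x := by
    rw [hasGradientAt_iff_hasFDerivAt] at *
    rw [map_add, map_smul, map_smul]
    exact ((hf.log hfx).add (hg.const_mul lam⁻¹)).sub_const _
  refine hlog.congr_of_eventuallyEq ?_
  filter_upwards [hf.continuousAt.eventually_ne hfx] with y hy
  rw [Real.log_div (mul_ne_zero hy (Real.exp_ne_zero _)) hZ, Real.log_mul hy (Real.exp_ne_zero _),
    Real.log_exp, div_eq_inv_mul]

theorem HasCompactSupport.hasGradientAt_integral_mul_comp_sub [ProperSpace E] [MeasurableSpace E]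
    [BorelSpace E] {μ : Measure E} [IsFiniteMeasureOnCompacts μ] {p φ : E → ℝ} {φ' : E → E}
    (hp : Continuous p) (hpc : HasCompactSupport p) (hφ : ∀ y, HasGradientAt φ (φ' y) y)
    (hφ' : Continuous φ') (x : E) :
    HasGradientAt (fun x => ∫ a, p a * φ (x - a) ∂μ) (∫ a, p a • φ' (x - a) ∂μ) x := by
  obtain ⟨C, hC⟩ : ∃ C, ∀ y ∈ (fun q : E × E => q.1 - q.2) '' (Metric.closedBall x 1 ×ˢ tsupport p),
      ‖φ' y‖ ≤ C :=
    (((isCompact_closedBall x 1).prod hpc).image continuous_sub).exists_bound_of_continuousOn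
      hφ'.continuousOn
  have hφc : Continuous φ := continuous_iff_continuousAt.2 fun y => (hφ y).continuousAt
  have h := (toDual ℝ E).toContinuousLinearEquiv.integral_comp_comm (μ := μ)
    (fun a => p a • φ' (x - a))
  simp only [LinearIsometryEquiv.coe_toContinuousLinearEquiv] at h
  rw [hasGradientAt_iff_hasFDerivAt, ← h]
  refine hasFDerivAt_integral_of_dominated_of_fderiv_le (F := fun x' a => p a * φ (x' - a))
    (F' := fun x' a => toDual ℝ E (p a • φ' (x' - a))) (bound := fun a => C * ‖p a‖)
    (Metric.ball_mem_nhds x one_pos)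
    (.of_forall fun x' =>
      (by fun_prop : Continuous fun a => p a * φ (x' - a)).aestronglyMeasurable)
    ((by fun_prop : Continuous fun a => p a * φ (x - a)).integrable_of_hasCompactSupport
      hpc.mul_right)
    ((toDual ℝ E).continuous.comp
      (by fun_prop : Continuous fun a => p a • φ' (x - a))).aestronglyMeasurable
    (.of_forall fun a x' hx' => ?_)
    ((hp.integrable_of_hasCompactSupport hpc).norm.const_mul C)
    (.of_forall fun a x' _ => ?_)
  · rw [LinearIsometryEquiv.norm_map, norm_smul, mul_comm]
    by_cases ha : a ∈ tsupport p
    · exact mul_le_mul_of_nonneg_right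
        (hC _ ⟨(x', a), ⟨Metric.ball_subset_closedBall hx', ha⟩, rfl⟩) (norm_nonneg _)
    · simp [image_eq_zero_of_notMem_tsupport ha]
  · rw [map_smul]
    exact ((hasFDerivAt_comp_sub a).mpr (hφ (x' - a))).const_mul (p a)

theorem HasCompactSupport.hasGradientAt_gaussian_smoothing [ProperSpace E] [MeasurableSpace E]
    [BorelSpace E] {μ : Measure E} [IsFiniteMeasureOnCompacts μ] {p φ : E → ℝ} {k : ℝ}
    (hp : Continuous p) (hpc : HasCompactSupport p)
    (hφ : ∀ y, HasGradientAt φ (-(φ y / k ^ 2) • y) y) (x : E) :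
    HasGradientAt (fun x => ∫ a, p a * φ (x - a) ∂μ)
      (-(1 / k ^ 2) • ((∫ a, p a * φ (x - a) ∂μ) • x - ∫ a, (p a * φ (x - a)) • a ∂μ)) x := by
  have hφc : Continuous φ := continuous_iff_continuousAt.2 fun y => (hφ y).continuousAt
  have hw : Continuous fun a => p a * φ (x - a) := by fun_prop
  convert hpc.hasGradientAt_integral_mul_comp_sub (μ := μ) hp hφ (by fun_prop) x using 1
  rw [← integral_smul_sub x (hw.integrable_of_hasCompactSupport hpc.mul_right) (v := fun a => a)
      ((hw.smul continuous_id).integrable_of_hasCompactSupport hpc.mul_right.smul_right),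
    ← integral_smul]
  congr 1 with a
  rw [smul_smul, smul_smul]
  ring_nf

end Gradient

theorem gradient_log_guided_smoothed_policy_general
    (n : ℕ) (k : ℝ) (hk : 0 < k)
    (φ : EuclideanSpace ℝ (Fin n) → ℝ)
    (hφ : ∀ x, φ x = (2 * Real.pi * k ^ 2) ^ (-(n : ℝ) / 2) *
        Real.exp (-‖x‖ ^ 2 / (2 * k ^ 2)))
    (p : EuclideanSpace ℝ (Fin n) → ℝ)
    (hpnonneg : ∀ a, 0 ≤ p a) (hpint : ∫ a, p a = 1)
    (hpcont : Continuous p) (hpsupp : HasCompactSupport p)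
    (pk : EuclideanSpace ℝ (Fin n) → ℝ)
    (hpk : ∀ x, pk x = ∫ a, p a * φ (x - a))
    (Q : EuclideanSpace ℝ (Fin n) → ℝ) (hQdiff : Differentiable ℝ Q)
    (lam Zk : ℝ) (hZk : 0 < Zk)
    (πk : EuclideanSpace ℝ (Fin n) → ℝ)
    (hπk : ∀ x, πk x = pk x * Real.exp (Q x / lam) / Zk)
    (m : EuclideanSpace ℝ (Fin n) → EuclideanSpace ℝ (Fin n))
    (hm : ∀ x, m x = (pk x)⁻¹ • ∫ a, (p a * φ (x - a)) • a) :
    ∀ x : EuclideanSpace ℝ (Fin n),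
      gradient (fun y => Real.log (πk y)) x
        = -(1 / k ^ 2) • (x - m x) + (1 / lam) • gradient Q x := by
  intro x
  have hφ_grad (y : EuclideanSpace ℝ (Fin n)) : HasGradientAt φ (-(φ y / k ^ 2) • y) y := by
    rw [funext hφ]
    exact hasGradientAt_mul_exp_neg_norm_sq_div _ k y
  have hφ_pos (y : EuclideanSpace ℝ (Fin n)) : 0 < φ y := by
    rw [hφ]
    positivity
  have hp_ne : p ≠ 0 := by
    rintro rfl
    simp at hpint
  have hpk_pos : 0 < pk x := hpk x ▸
    integral_mul_comp_sub_pos hpcont hpsupp hpnonneg hp_ne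
      (continuous_iff_continuousAt.2 fun y => (hφ_grad y).continuousAt) hφ_pos x
  have hpk_grad :
      HasGradientAt pk (-(1 / k ^ 2) • (pk x • x - ∫ a, (p a * φ (x - a)) • a)) x := by
    rw [funext hpk]
    exact hpsupp.hasGradientAt_gaussian_smoothing hpcont hφ_grad x
  simp only [hπk]
  rw [(hpk_grad.log_mul_exp_div (hQdiff x).hasGradientAt hpk_pos.ne' lam hZk.ne').gradient, hm x,
    smul_comm, smul_sub, smul_smul, inv_mul_cancel₀ hpk_pos.ne', one_smul, one_div lam]

/-- Guided score identity for the smoothed policy (Eqs. (25)–(26)): for the guided smoothed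
policy density `π_k(x) = p_k(x) * exp (Q x / λ) / Z_k`, where `p` is a continuous compactly
supported probability density and `p_k` its Gaussian smoothing, the score satisfies
`∇ log π^k(a^k) = −E[(a^k − a)/k² | a^k] + (1/λ) ∇ Q(s, a^k)`, i.e.
`∇ log π_k x = −(1/k²) • (x − m x) + (1/λ) • ∇ Q x` with posterior mean
`m x = (p_k x)⁻¹ • ∫ (p a * φ_k (x − a)) • a ∂a`. -/
theorem gradient_log_guided_smoothed_policy
    (n : ℕ) (hn : 0 < n) (k : ℝ) (hk : 0 < k)
    (φ : EuclideanSpace ℝ (Fin n) → ℝ)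
    (hφ : ∀ x, φ x = (2 * Real.pi * k ^ 2) ^ (-(n : ℝ) / 2) *
        Real.exp (-‖x‖ ^ 2 / (2 * k ^ 2)))
    (p : EuclideanSpace ℝ (Fin n) → ℝ)
    (hpmeas : Measurable p) (hpnonneg : ∀ a, 0 ≤ p a) (hpint : ∫ a, p a = 1)
    (hpcont : Continuous p) (hpsupp : HasCompactSupport p)
    (pk : EuclideanSpace ℝ (Fin n) → ℝ)
    (hpk : ∀ x, pk x = ∫ a, p a * φ (x - a))
    (Q : EuclideanSpace ℝ (Fin n) → ℝ) (hQdiff : Differentiable ℝ Q)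
    (lam Zk : ℝ) (hlam : 0 < lam) (hZk : 0 < Zk)
    (πk : EuclideanSpace ℝ (Fin n) → ℝ)
    (hπk : ∀ x, πk x = pk x * Real.exp (Q x / lam) / Zk)
    (m : EuclideanSpace ℝ (Fin n) → EuclideanSpace ℝ (Fin n))
    (hm : ∀ x, m x = (pk x)⁻¹ • ∫ a, (p a * φ (x - a)) • a) :
    ∀ x : EuclideanSpace ℝ (Fin n),
      gradient (fun y => Real.log (πk y)) x
        = -(1 / k ^ 2) • (x - m x) + (1 / lam) • gradient Q x :=
  gradient_log_guided_smoothed_policy_general n k hk φ hφ p hpnonneg hpint hpcont hpsupp pk hpk Q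
    hQdiff lam Zk hZk πk hπk m hm
end

section
/- Let f, g : E × ℝ → E be measurable. If the reconstruction loss of f vanishes, L_RC(f) = 0, then the consistency loss of the pair (f, g) equals the reconstruction-type loss of g at the lower noise levels: ∑_{m=1}^{M−1} ∫⁻ ‖f (a + k (m+1) • z, k (m+1)) − g (a + k m • z, k m)‖₊^2 ∂(P.prod γ) = ∑_{m=1}^{M−1} ∫⁻ ‖a − g (a + k m • z, k m)‖₊^2 ∂(P.prod γ). In particular, whenever both networks perfectly reconstruct (g (a + k m • z, k m) = a almost everywhere for all m ∈ {1, …, M−1} as well), the consistency training loss L_CT(f, g) is zero; this is the claim of Appendix A.2 that the reconstruction loss has the same convergence objective as the consistency loss. -/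
open MeasureTheory ProbabilityTheory

/-! A nonnegative measurable integrand with zero lower integral vanishes almost everywhere, so
`L_RC(f) = 0` means `f (a + k (m+1) • z, k (m+1)) = a` for almost every `(a, z)` at every level.
Substituting `a` for `f` in each consistency term turns it into the reconstruction-type loss of `g`,
which vanishes in turn when `g` reconstructs almost everywhere. -/

namespace MeasureTheory

variable {α E : Type*} [MeasurableSpace α] [NormedAddCommGroup E] {μ : Measure α}
  {u u' v : α → E}

theorem ae_eq_of_lintegral_nnnorm_sub_sq_eq_zero
    (huv : AEStronglyMeasurable (fun x => u x - v x) μ)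
    (h : ∫⁻ x, (‖u x - v x‖₊ : ENNReal) ^ 2 ∂μ = 0) : u =ᵐ[μ] v := by
  filter_upwards [(lintegral_eq_zero_iff' (huv.enorm.pow_const 2)).mp h] with x hx
  simpa [sub_eq_zero] using hx

theorem lintegral_nnnorm_sub_sq_eq_zero_of_ae_eq (h : u =ᵐ[μ] v) :
    ∫⁻ x, (‖u x - v x‖₊ : ENNReal) ^ 2 ∂μ = 0 := by
  rw [← lintegral_zero (μ := μ)]
  exact lintegral_congr_ae (h.mono fun x hx => by simp [hx])

theorem lintegral_nnnorm_sub_sq_congr_ae_left (h : u =ᵐ[μ] u') :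
    ∫⁻ x, (‖u x - v x‖₊ : ENNReal) ^ 2 ∂μ
      = ∫⁻ x, (‖u' x - v x‖₊ : ENNReal) ^ 2 ∂μ :=
  lintegral_congr_ae (h.mono fun x hx => by simp only [hx])

end MeasureTheory

theorem reconstruction_loss_zero_consistency_loss_eq_general
    (n : ℕ)
    (P : Measure (EuclideanSpace ℝ (Fin n)))
    (γ : Measure (EuclideanSpace ℝ (Fin n)))
    (M : ℕ)
    (k : ℕ → ℝ)
    (f g : EuclideanSpace ℝ (Fin n) × ℝ → EuclideanSpace ℝ (Fin n))
    (hf : Measurable f)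
    (hloss : ∑ m ∈ Finset.Icc 1 (M - 1),
        ∫⁻ q, (‖f (q.1 + k (m + 1) • q.2, k (m + 1)) - q.1‖₊ : ENNReal) ^ 2
          ∂(P.prod γ) = 0) :
    (∑ m ∈ Finset.Icc 1 (M - 1),
        ∫⁻ q, (‖f (q.1 + k (m + 1) • q.2, k (m + 1))
            - g (q.1 + k m • q.2, k m)‖₊ : ENNReal) ^ 2 ∂(P.prod γ)
      = ∑ m ∈ Finset.Icc 1 (M - 1),
        ∫⁻ q, (‖q.1 - g (q.1 + k m • q.2, k m)‖₊ : ENNReal) ^ 2 ∂(P.prod γ)) ∧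
    ((∀ m ∈ Finset.Icc 1 (M - 1),
        ∀ᵐ q ∂(P.prod γ), g (q.1 + k m • q.2, k m) = q.1) →
      ∑ m ∈ Finset.Icc 1 (M - 1),
        ∫⁻ q, (‖f (q.1 + k (m + 1) • q.2, k (m + 1))
            - g (q.1 + k m • q.2, k m)‖₊ : ENNReal) ^ 2 ∂(P.prod γ) = 0) := by
  have hf_rec : ∀ m ∈ Finset.Icc 1 (M - 1),
      (fun q => f (q.1 + k (m + 1) • q.2, k (m + 1))) =ᵐ[P.prod γ] Prod.fst := fun m hm =>
    ae_eq_of_lintegral_nnnorm_sub_sq_eq_zero (by fun_prop) (Finset.sum_eq_zero_iff.mp hloss m hm)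
  have hEq := Finset.sum_congr rfl fun m hm =>
    lintegral_nnnorm_sub_sq_congr_ae_left (v := fun q => g (q.1 + k m • q.2, k m)) (hf_rec m hm)
  exact ⟨hEq, fun hg_rec => hEq.trans <| Finset.sum_eq_zero fun m hm =>
    lintegral_nnnorm_sub_sq_eq_zero_of_ae_eq (Filter.EventuallyEq.symm (hg_rec m hm))⟩

/-- If the reconstruction loss of the consistency policy `f` vanishes, then the consistency
loss of the pair `(f, g)` equals the reconstruction-type loss of `g` at the lower noise
levels:
`∑_{m=1}^{M−1} ∫⁻ ‖f (a + k (m+1) • z, k (m+1)) − g (a + k m • z, k m)‖₊² ∂(P.prod γ)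
  = ∑_{m=1}^{M−1} ∫⁻ ‖a − g (a + k m • z, k m)‖₊² ∂(P.prod γ)`.
In particular, if `g` also perfectly reconstructs at every lower noise level, then the
consistency training loss `L_CT(f, g)` is zero; this is the claim of Appendix A.2 that the
reconstruction loss has the same convergence objective as the consistency loss. -/
theorem reconstruction_loss_zero_consistency_loss_eq
    (n : ℕ) (hn : 0 < n)
    (P : Measure (EuclideanSpace ℝ (Fin n))) [IsProbabilityMeasure P]
    (γ : Measure (EuclideanSpace ℝ (Fin n)))
    (hγ : γ = (Measure.pi fun _ : Fin n => gaussianReal 0 1).map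
        (MeasurableEquiv.toLp 2 (Fin n → ℝ)))
    (M : ℕ) (hM : 2 ≤ M)
    (k : ℕ → ℝ) (hk : ∀ m ∈ Finset.Icc 1 M, 0 < k m)
    (f g : EuclideanSpace ℝ (Fin n) × ℝ → EuclideanSpace ℝ (Fin n))
    (hf : Measurable f) (hg : Measurable g)
    (hloss : ∑ m ∈ Finset.Icc 1 (M - 1),
        ∫⁻ q, (‖f (q.1 + k (m + 1) • q.2, k (m + 1)) - q.1‖₊ : ENNReal) ^ 2
          ∂(P.prod γ) = 0) :
    (∑ m ∈ Finset.Icc 1 (M - 1),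
        ∫⁻ q, (‖f (q.1 + k (m + 1) • q.2, k (m + 1))
            - g (q.1 + k m • q.2, k m)‖₊ : ENNReal) ^ 2 ∂(P.prod γ)
      = ∑ m ∈ Finset.Icc 1 (M - 1),
        ∫⁻ q, (‖q.1 - g (q.1 + k m • q.2, k m)‖₊ : ENNReal) ^ 2 ∂(P.prod γ)) ∧
    ((∀ m ∈ Finset.Icc 1 (M - 1),
        ∀ᵐ q ∂(P.prod γ), g (q.1 + k m • q.2, k m) = q.1) →
      ∑ m ∈ Finset.Icc 1 (M - 1),
        ∫⁻ q, (‖f (q.1 + k (m + 1) • q.2, k (m + 1))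
            - g (q.1 + k m • q.2, k m)‖₊ : ENNReal) ^ 2 ∂(P.prod γ) = 0) :=
  reconstruction_loss_zero_consistency_loss_eq_general n P γ M k f g hf hloss
end
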